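/- For α > 1, λ ∈ (1/α, 1], and a prime n ≥ 2, the sum W₃ := ∑_{k=−(n−1)/2, k≠0}^{(n−1)/2} [ (∑_{p∈ℤ} 1/|pn+k|^{αλ})² − ∑_{p∈ℤ} 1/|pn+k|^{2αλ} ] satisfies W₃ ≤ 2^{2αλ+1} [2ζ(αλ)]² / n^{αλ}. -/

import Mathlib

/-!
Write `s = αλ` and `Z = ∑_{m ≠ 0} |m|^{-s} = 2ζ(s)`. For fixed `k`, split `∑_p |pn+k|^{-s}` into
the term `a = |k|^{-s}` at `p = 0` and the tail `b`. Since `|pn + k| ≥ |p|n/2` for `p ≠ 0`, the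
tail is at most `B := (2/n)^s Z`, and keeping only the `p = 0` term of the second sum bounds the
`k`-th summand by `(a + b)² − a² = 2ab + b² ≤ 2aB + B²`. Summing over the at most `n` values of
`k` gives `2BZ + nB²`, which is at most `2^{2s+1} Z² / n^s` because `2 ≤ 2^s` and `n ≤ n^s`.
-/

/-- The zeta function value `ζ(x) = ∑_{k ≥ 1} k^{-x}`. -/
noncomputable def zetaR (x : ℝ) : ℝ := ∑' k : ℕ, ((k : ℝ) + 1) ^ (-x)

open Finset

lemma zetaR_nonneg (s : ℝ) : 0 ≤ zetaR s :=
  tsum_nonneg fun _ => by positivity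

section Zeta

variable {s : ℝ}

lemma hasSum_zetaR (hs : 1 < s) : HasSum (fun k : ℕ => ((k : ℝ) + 1) ^ (-s)) (zetaR s) := by
  have h := (summable_nat_add_iff 1).mpr (Real.summable_nat_rpow.mpr (neg_lt_neg hs))
  push_cast at h
  exact h.hasSum

lemma hasSum_abs_int_rpow_neg (hs : 1 < s) :
    HasSum (fun m : ℤ => |(m : ℝ)| ^ (-s)) (2 * zetaR s) := by
  have hpos : HasSum (fun n : ℕ => |((n : ℤ) : ℝ)| ^ (-s)) (zetaR s) := by
    refine (hasSum_nat_add_iff' 1).mp ?_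
    simp only [range_one, sum_singleton, Nat.cast_zero, Int.cast_zero, abs_zero,
      Real.zero_rpow (neg_ne_zero.mpr (zero_lt_one.trans hs).ne'), sub_zero]
    refine (hasSum_zetaR hs).congr_fun fun n => ?_
    push_cast
    rw [abs_of_nonneg (by positivity)]
  have hneg : HasSum (fun n : ℕ => |(Int.cast (-((n : ℤ) + 1)) : ℝ)| ^ (-s)) (zetaR s) := by
    convert hasSum_zetaR hs using 2 with n
    push_cast
    rw [abs_neg, abs_of_nonneg (by positivity)]
  rw [two_mul]
  exact hpos.of_nat_of_neg_add_one hneg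

end Zeta

lemma sq_tsum_sub_tsum_sq_le {ι : Type*} [DecidableEq ι] {f : ι → ℝ} (hf : Summable f)
    (hf2 : Summable fun j => f j ^ 2) (hf0 : ∀ j, 0 ≤ f j) (i : ι) {B : ℝ}
    (hB : ∑' j, (if j = i then 0 else f j) ≤ B) :
    (∑' j, f j) ^ 2 - ∑' j, f j ^ 2 ≤ 2 * f i * B + B ^ 2 := by
  have hsq : f i ^ 2 ≤ ∑' j, f j ^ 2 := hf2.le_tsum i fun j _ => sq_nonneg (f j)
  have htail : 0 ≤ ∑' j, (if j = i then 0 else f j) :=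
    tsum_nonneg fun j => by split_ifs <;> simp [hf0]
  rw [hf.tsum_eq_add_tsum_ite i]
  nlinarith [hf0 i]

lemma abs_mul_le_two_mul_abs_mul_add {N k p : ℤ} (hk : 2 * |k| ≤ N) (hp : p ≠ 0) :
    |p| * N ≤ 2 * |p * N + k| := by
  have hN : 0 ≤ N := by linarith [abs_nonneg k]
  have hpN : N ≤ |p| * N := le_mul_of_one_le_left hN (Int.one_le_abs hp)
  have htri : |p * N| ≤ |p * N + k| + |k| := by simpa using abs_sub (p * N + k) k
  rw [abs_mul, abs_of_nonneg hN] at htri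
  linarith

section Tail

variable {s : ℝ} {N : ℕ} {k : ℤ}

lemma abs_mul_add_rpow_neg_le (hs : 0 ≤ s) (hN : 0 < N) (hk : 2 * |k| ≤ N) {p : ℤ}
    (hp : p ≠ 0) : |((p * N + k : ℤ) : ℝ)| ^ (-s) ≤ (2 / (N : ℝ)) ^ s * |(p : ℝ)| ^ (-s) := by
  have hlow : |(p : ℝ)| * (N / 2) ≤ |((p * N + k : ℤ) : ℝ)| := by
    have h : ((|p| * N : ℤ) : ℝ) ≤ ((2 * |p * N + k| : ℤ) : ℝ) := by
      exact_mod_cast abs_mul_le_two_mul_abs_mul_add hk hp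
    push_cast at h ⊢
    linarith
  have hp' : 0 < |(p : ℝ)| := by positivity
  calc |((p * N + k : ℤ) : ℝ)| ^ (-s) ≤ (|(p : ℝ)| * (N / 2)) ^ (-s) :=
        Real.rpow_le_rpow_of_nonpos (by positivity) hlow (by linarith)
    _ = (2 / (N : ℝ)) ^ s * |(p : ℝ)| ^ (-s) := by
        rw [Real.mul_rpow hp'.le (by positivity), mul_comm, Real.rpow_neg (by positivity),
          ← Real.inv_rpow (by positivity), inv_div]

lemma tsum_ite_abs_mul_add_rpow_neg_le (hs : 1 < s) (hN : 0 < N) (hk : 2 * |k| ≤ N) :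
    ∑' p : ℤ, (if p = 0 then 0 else |((p * N + k : ℤ) : ℝ)| ^ (-s))
      ≤ (2 / (N : ℝ)) ^ s * (2 * zetaR s) := by
  have hterm : ∀ p : ℤ, (if p = 0 then 0 else |((p * N + k : ℤ) : ℝ)| ^ (-s))
      ≤ (2 / (N : ℝ)) ^ s * |(p : ℝ)| ^ (-s) := by
    intro p
    split_ifs with hp
    · positivity
    · exact abs_mul_add_rpow_neg_le (by linarith) hN hk hp
  have hsum := (hasSum_abs_int_rpow_neg hs).mul_left ((2 / (N : ℝ)) ^ s)
  refine (Summable.tsum_le_tsum hterm ?_ hsum.summable).trans hsum.tsum_eq.le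
  exact hsum.summable.of_nonneg_of_le (fun p => by split_ifs <;> positivity) hterm

lemma sq_tsum_abs_mul_add_rpow_neg_sub_le (hs : 1 < s) (hN : 0 < N) (hk : 2 * |k| ≤ N) :
    (∑' p : ℤ, |((p * N + k : ℤ) : ℝ)| ^ (-s)) ^ 2
        - ∑' p : ℤ, |((p * N + k : ℤ) : ℝ)| ^ (-(2 * s))
      ≤ 2 * |(k : ℝ)| ^ (-s) * ((2 / (N : ℝ)) ^ s * (2 * zetaR s))
        + ((2 / (N : ℝ)) ^ s * (2 * zetaR s)) ^ 2 := by
  have hinj : Function.Injective fun p : ℤ => p * N + k := fun a b hab =>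
    mul_right_cancel₀ (by omega) (add_right_cancel hab)
  have hsq (x : ℝ) : |x| ^ (-(2 * s)) = (|x| ^ (-s)) ^ 2 := by
    rw [← Real.rpow_mul_natCast (abs_nonneg x)]
    push_cast
    ring_nf
  simp_rw [hsq]
  simpa using sq_tsum_sub_tsum_sq_le ((Real.summable_abs_int_rpow hs).comp_injective hinj)
    (((Real.summable_abs_int_rpow (by linarith : 1 < 2 * s)).comp_injective hinj).congr
      fun p => hsq _) (fun _ => Real.rpow_nonneg (abs_nonneg _) _) 0
    (tsum_ite_abs_mul_add_rpow_neg_le hs hN hk)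

end Tail

lemma natCast_div_rpow_le_one {s : ℝ} (hs : 1 ≤ s) (n : ℕ) : (n : ℝ) / n ^ s ≤ 1 := by
  rcases n.eq_zero_or_pos with rfl | hn
  · simp
  · exact div_le_one_of_le₀ (Real.self_le_rpow_of_one_le (by exact_mod_cast hn) hs)
      (by positivity)

lemma two_mul_mul_add_natCast_mul_sq_le {s : ℝ} (hs : 1 ≤ s) (Z : ℝ) (n : ℕ) :
    2 * ((2 / (n : ℝ)) ^ s * Z) * Z + n * ((2 / (n : ℝ)) ^ s * Z) ^ 2
      ≤ 2 ^ (2 * s + 1) * Z ^ 2 / n ^ s := by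
  have hA : (2 : ℝ) ≤ 2 ^ s := Real.self_le_rpow_of_one_le one_le_two hs
  rw [Real.div_rpow zero_le_two n.cast_nonneg, Real.rpow_add two_pos, Real.rpow_one,
    mul_comm 2 s, Real.rpow_mul zero_le_two, Real.rpow_two]
  set A := (2 : ℝ) ^ s
  set C := (n : ℝ) ^ s
  calc 2 * (A / C * Z) * Z + n * (A / C * Z) ^ 2
        = 2 * A * (Z ^ 2 / C) + n / C * (A ^ 2 * (Z ^ 2 / C)) := by ring
    _ ≤ A * A * (Z ^ 2 / C) + 1 * (A ^ 2 * (Z ^ 2 / C)) := by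
        gcongr
        exact natCast_div_rpow_le_one hs n
    _ = A ^ 2 * 2 * Z ^ 2 / C := by ring

lemma card_filter_ne_zero_Icc_le (n : ℕ) :
    #((Icc (-(((n : ℤ) - 1) / 2)) (((n : ℤ) - 1) / 2)).filter (fun k => k ≠ 0)) ≤ n :=
  (card_filter_le _ _).trans (by rw [Int.card_Icc]; omega)

lemma one_div_intCast_abs_rpow (m : ℤ) (t : ℝ) :
    1 / ((|m| : ℤ) : ℝ) ^ t = |(m : ℝ)| ^ (-t) := by
  rw [Int.cast_abs, Real.rpow_neg (abs_nonneg _), one_div]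

theorem W3_bound_general (α lam : ℝ) (hα : 1 < α) (hlam1 : 1 / α < lam)
    (n : ℕ) :
    ∑ k ∈ (Finset.Icc (-(((n : ℤ) - 1) / 2)) (((n : ℤ) - 1) / 2)).filter (fun k => k ≠ 0),
        ((∑' p : ℤ, 1 / ((|p * (n : ℤ) + k| : ℤ) : ℝ) ^ (α * lam)) ^ 2
          - ∑' p : ℤ, 1 / ((|p * (n : ℤ) + k| : ℤ) : ℝ) ^ (2 * α * lam))
      ≤ (2 : ℝ) ^ (2 * α * lam + 1) * (2 * zetaR (α * lam)) ^ 2 / (n : ℝ) ^ (α * lam) := by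
  have hs : 1 < α * lam := by
    rw [div_lt_iff₀ (by linarith)] at hlam1
    linarith
  simp only [mul_assoc 2 α lam, one_div_intCast_abs_rpow]
  set s := α * lam
  set S := (Icc (-(((n : ℤ) - 1) / 2)) (((n : ℤ) - 1) / 2)).filter (fun k => k ≠ 0)
  set B := (2 / (n : ℝ)) ^ s * (2 * zetaR s)
  have hsummand : ∀ k ∈ S, (∑' p : ℤ, |((p * n + k : ℤ) : ℝ)| ^ (-s)) ^ 2
        - ∑' p : ℤ, |((p * n + k : ℤ) : ℝ)| ^ (-(2 * s))
      ≤ 2 * |(k : ℝ)| ^ (-s) * B + B ^ 2 := by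
    intro k hk
    simp only [S, mem_filter, mem_Icc] at hk
    have hk' : 2 * |k| ≤ n := by
      have := abs_le.mpr hk.1
      omega
    exact sq_tsum_abs_mul_add_rpow_neg_sub_le hs (by omega) hk'
  have hB : 0 ≤ B := by
    have := zetaR_nonneg s
    positivity
  calc _ ≤ ∑ k ∈ S, (2 * |(k : ℝ)| ^ (-s) * B + B ^ 2) := sum_le_sum hsummand
    _ = 2 * B * ∑ k ∈ S, |(k : ℝ)| ^ (-s) + #S * B ^ 2 := by
        rw [sum_add_distrib, mul_sum, sum_const, nsmul_eq_mul]
        exact congrArg₂ _ (sum_congr rfl fun _ _ => by ring) rfl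
    _ ≤ 2 * B * (2 * zetaR s) + n * B ^ 2 := by
        gcongr
        · exact sum_le_hasSum S (fun _ _ => by positivity) (hasSum_abs_int_rpow_neg hs)
        · exact_mod_cast card_filter_ne_zero_Icc_le n
    _ ≤ _ := two_mul_mul_add_natCast_mul_sq_le hs.le _ n

/-- Bound on the auxiliary sum `W₃`: for `α > 1`, `λ ∈ (1/α, 1]` and an odd prime `n`,
`∑_{k=−(n−1)/2, k≠0}^{(n−1)/2} [ (∑_{p∈ℤ} |pn+k|^{−αλ})² − ∑_{p∈ℤ} |pn+k|^{−2αλ} ]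
  ≤ 2^{2αλ+1} [2ζ(αλ)]² / n^{αλ}`. -/
theorem W3_bound (α lam : ℝ) (hα : 1 < α) (hlam1 : 1 / α < lam) (hlam2 : lam ≤ 1)
    (n : ℕ) (hn : n.Prime) (hodd : Odd n) :
    ∑ k ∈ (Finset.Icc (-(((n : ℤ) - 1) / 2)) (((n : ℤ) - 1) / 2)).filter (fun k => k ≠ 0),
        ((∑' p : ℤ, 1 / ((|p * (n : ℤ) + k| : ℤ) : ℝ) ^ (α * lam)) ^ 2
          - ∑' p : ℤ, 1 / ((|p * (n : ℤ) + k| : ℤ) : ℝ) ^ (2 * α * lam))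
      ≤ (2 : ℝ) ^ (2 * α * lam + 1) * (2 * zetaR (α * lam)) ^ 2 / (n : ℝ) ^ (α * lam) :=
  W3_bound_general α lam hα hlam1 n
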